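/- arXiv:2203.08532 — 4 statements merged into one kernel-verified Lean document; each statement's English description precedes it below -/
import Mathlib

section
/- In the compliant setting, the output error satisfies s_δ − s_rb ≤ ‖r̂‖² / α_LB, where s_δ = f(u_δ), s_rb = f(u_rb), r̂ is the Riesz representative of the residual on V_δ, and α_LB is a positive lower bound on the coercivity constant of a over V_δ. -/
open RealInnerProductSpace

/-- Output error bound (compliant case): `s_δ - s_rb ≤ ‖r̂‖² / α_LB`. -/
theorem output_error_bound
    {V : Type*} [NormedAddCommGroup V] [InnerProductSpace ℝ V] [CompleteSpace V]
    (a : V →ₗ[ℝ] V →ₗ[ℝ] ℝ) (αLB γ : ℝ) (hαLB : 0 < αLB)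
    (hsymm : ∀ w v : V, a w v = a v w)
    (hcont : ∀ w v : V, |a w v| ≤ γ * ‖w‖ * ‖v‖)
    (f : V →L[ℝ] ℝ)
    (Vδ Vrb : Submodule ℝ V) (hVδ : IsClosed (Vδ : Set V))
    (hsub : Vrb ≤ Vδ)
    (hcoer : ∀ v ∈ Vδ, αLB * ‖v‖ ^ 2 ≤ a v v)
    (uδ urb : V) (huδ : uδ ∈ Vδ) (hurb : urb ∈ Vrb)
    (hGδ : ∀ v ∈ Vδ, a uδ v = f v)
    (hGrb : ∀ v ∈ Vrb, a urb v = f v)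
    (rhat : V) (hrhat : rhat ∈ Vδ)
    (hriesz : ∀ v ∈ Vδ, (⟪rhat, v⟫ : ℝ) = f v - a urb v) :
    f uδ - f urb ≤ ‖rhat‖ ^ 2 / αLB := by
  set e := uδ - urb with he
  have heδ : e ∈ Vδ := Vδ.sub_mem huδ (hsub hurb)
  have hurbδ : urb ∈ Vδ := hsub hurb
  have hsplit : a e e = a uδ e - a urb e := by
    simp [he, map_sub, LinearMap.sub_apply]; ring
  have horth : a e urb = 0 := by
    have : a e urb = a uδ urb - a urb urb := by
      simp [he, map_sub, LinearMap.sub_apply]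
    rw [this, hGδ urb hurbδ, hGrb urb hurb, sub_self]
  have hfe : f uδ - f urb = f e := by simp [he, map_sub]
  have hfea : f e = a e e := by
    have h1 : a uδ e = f e := hGδ e heδ
    have h2 : a urb e = a e urb := hsymm urb e
    rw [hsplit, h1, h2, horth, sub_zero]
  have hinner : a e e = ⟪rhat, e⟫ := by
    have h := hriesz e heδ
    rw [h, ← hGδ e heδ, hsplit]
  have hcs : (⟪rhat, e⟫ : ℝ) ≤ ‖rhat‖ * ‖e‖ := real_inner_le_norm rhat e
  have hc : αLB * ‖e‖ ^ 2 ≤ a e e := hcoer e heδ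
  have hkey : a e e ≤ ‖rhat‖ ^ 2 / αLB := by
    rw [le_div_iff₀ hαLB]
    nlinarith [norm_nonneg e, norm_nonneg rhat, sq_nonneg (αLB * ‖e‖ - ‖rhat‖)]
  rw [hfe, hfea]
  exact hkey
end

section
/- If the relative V-norm estimator η_{V,rel} = 2‖r̂‖/(α_LB ‖u_rb‖) satisfies η_{V,rel} ≤ 1 (and u_rb ≠ 0), then ‖u_δ‖ ≥ (1/2)‖u_rb‖ and the relative error bound ‖u_δ − u_rb‖/‖u_δ‖ ≤ η_{V,rel} holds. -/
open RealInnerProductSpace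

/-- Relative V-norm error bound: if `η_{V,rel} = 2‖r̂‖/(α_LB‖u_rb‖) ≤ 1` and
`u_rb ≠ 0`, then `‖uδ‖ ≥ ½‖u_rb‖` and `‖uδ - u_rb‖/‖uδ‖ ≤ η_{V,rel}`. -/
theorem relative_V_norm_error_bound
    {V : Type*} [NormedAddCommGroup V] [InnerProductSpace ℝ V] [CompleteSpace V]
    (a : V →ₗ[ℝ] V →ₗ[ℝ] ℝ) (αLB : ℝ) (hαLB : 0 < αLB)
    (f : V →L[ℝ] ℝ)
    (Vδ Vrb : Submodule ℝ V) (hVδ : IsClosed (Vδ : Set V))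
    (hsub : Vrb ≤ Vδ)
    (hcoer : ∀ v ∈ Vδ, αLB * ‖v‖ ^ 2 ≤ a v v)
    (uδ urb : V) (huδ : uδ ∈ Vδ) (hurb : urb ∈ Vrb)
    (hGδ : ∀ v ∈ Vδ, a uδ v = f v)
    (hGrb : ∀ v ∈ Vrb, a urb v = f v)
    (rhat : V) (hrhat : rhat ∈ Vδ)
    (hriesz : ∀ v ∈ Vδ, (⟪rhat, v⟫ : ℝ) = f v - a urb v)
    (hurb0 : urb ≠ 0)
    (hrel : 2 * ‖rhat‖ / (αLB * ‖urb‖) ≤ 1) :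
    (1 / 2) * ‖urb‖ ≤ ‖uδ‖ ∧
      ‖uδ - urb‖ / ‖uδ‖ ≤ 2 * ‖rhat‖ / (αLB * ‖urb‖) := by

  have he : uδ - urb ∈ Vδ := Vδ.sub_mem huδ (hsub hurb)
  have hurbn : 0 < ‖urb‖ := norm_pos_iff.mpr hurb0
  -- basic error bound: αLB * ‖e‖ ≤ ‖rhat‖
  have key : αLB * ‖uδ - urb‖ ≤ ‖rhat‖ := by
    rcases eq_or_ne (uδ - urb) 0 with h0 | h0
    · simp [h0]
    · have hen : 0 < ‖uδ - urb‖ := norm_pos_iff.mpr h0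
      have h1 : αLB * ‖uδ - urb‖ ^ 2 ≤ a (uδ - urb) (uδ - urb) := hcoer _ he
      have h2 : a (uδ - urb) (uδ - urb) = ⟪rhat, uδ - urb⟫ := by
        have := hriesz (uδ - urb) he
        have hG := hGδ (uδ - urb) he
        simp only [map_sub, LinearMap.sub_apply] at *
        linarith
      have h3 : (⟪rhat, uδ - urb⟫ : ℝ) ≤ ‖rhat‖ * ‖uδ - urb‖ :=
        real_inner_le_norm _ _
      have h4 : αLB * ‖uδ - urb‖ ^ 2 ≤ ‖rhat‖ * ‖uδ - urb‖ := by
        rw [h2] at h1; linarith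
      nlinarith
  have hsmall : 2 * ‖rhat‖ ≤ αLB * ‖urb‖ := by
    have hd : 0 < αLB * ‖urb‖ := by positivity
    calc 2 * ‖rhat‖ = (2 * ‖rhat‖ / (αLB * ‖urb‖)) * (αLB * ‖urb‖) := by
          field_simp
      _ ≤ 1 * (αLB * ‖urb‖) := by
          apply mul_le_mul_of_nonneg_right hrel hd.le
      _ = αLB * ‖urb‖ := one_mul _
  have herr : ‖uδ - urb‖ ≤ ‖urb‖ / 2 := by
    nlinarith
  have hlow : (1 / 2) * ‖urb‖ ≤ ‖uδ‖ := by
    have := norm_sub_norm_le urb uδ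
    have h5 : ‖urb - uδ‖ = ‖uδ - urb‖ := norm_sub_rev _ _
    linarith
  refine ⟨hlow, ?_⟩
  have huδn : 0 < ‖uδ‖ := lt_of_lt_of_le (by positivity) hlow
  rw [div_le_div_iff₀ huδn (by positivity)]
  -- ‖uδ - urb‖ * (αLB * ‖urb‖) ≤ 2 * ‖rhat‖ * ‖uδ‖
  nlinarith [mul_le_mul_of_nonneg_right key (norm_nonneg urb),
    mul_le_mul_of_nonneg_left hlow (norm_nonneg rhat)]
end

section
/- Under the hypothesis η_{V,rel} ≤ 1, the relative effectivity satisfies eff_{V,rel} = η_{V,rel}‖u_δ‖ / ‖u_δ − u_rb‖ ≤ 3 γ_δ / α_LB (for u_δ ≠ u_rb, u_rb ≠ 0). -/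
/-!
The error `e = uδ - urb` satisfies `a e v = ⟪r̂, v⟫` on `Vδ`, so coercivity gives `α‖e‖ ≤ ‖r̂‖`
and continuity gives `‖r̂‖ ≤ γ‖e‖`. Under `η_{V,rel} ≤ 1` the first bound yields
`‖e‖ ≤ ‖urb‖ / 2`, hence `‖uδ‖ ≤ 3/2 ‖urb‖`; combined with the second this bounds the effectivity.
-/

open RealInnerProductSpace

section CoerciveForm

variable {V : Type*} [NormedAddCommGroup V] [InnerProductSpace ℝ V]
  {a : V →ₗ[ℝ] V →ₗ[ℝ] ℝ} {K : Submodule ℝ V} {α γ : ℝ}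

theorem coercivity_le_continuity (hcoer : ∀ v ∈ K, α * ‖v‖ ^ 2 ≤ a v v)
    (hcont : ∀ w ∈ K, ∀ v ∈ K, a w v ≤ γ * ‖w‖ * ‖v‖) {v : V} (hv : v ∈ K) (hv0 : v ≠ 0) :
    α ≤ γ := by
  have hpos : 0 < ‖v‖ ^ 2 := by positivity
  have h : α * ‖v‖ ^ 2 ≤ γ * ‖v‖ ^ 2 := by nlinarith [hcoer v hv, hcont v hv v hv]
  exact le_of_mul_le_mul_right h hpos

variable {e r : V}

theorem mul_norm_le_norm_of_coercive (hcoer : ∀ v ∈ K, α * ‖v‖ ^ 2 ≤ a v v) (he : e ∈ K)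
    (hr : ∀ v ∈ K, a e v = ⟪r, v⟫) : α * ‖e‖ ≤ ‖r‖ := by
  have h : α * ‖e‖ ^ 2 ≤ ‖r‖ * ‖e‖ :=
    (hcoer e he).trans ((hr e he).trans_le (real_inner_le_norm r e))
  rcases (norm_nonneg e).eq_or_lt with he0 | hepos
  · rw [← he0, mul_zero]
    exact norm_nonneg r
  · nlinarith

theorem norm_le_mul_norm_of_bounded (hcont : ∀ w ∈ K, ∀ v ∈ K, a w v ≤ γ * ‖w‖ * ‖v‖)
    (hγ : 0 ≤ γ) (he : e ∈ K) (hrK : r ∈ K) (hr : ∀ v ∈ K, a e v = ⟪r, v⟫) :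
    ‖r‖ ≤ γ * ‖e‖ := by
  have h : ‖r‖ * ‖r‖ ≤ γ * ‖e‖ * ‖r‖ := by
    rw [← real_inner_self_eq_norm_mul_norm, ← hr r hrK]
    exact hcont e he r hrK
  rcases (norm_nonneg r).eq_or_lt with hr0 | hrpos
  · rw [← hr0]
    positivity
  · exact le_of_mul_le_mul_right h hrpos

end CoerciveForm

theorem relative_V_norm_effectivity_bound_general
    {V : Type*} [NormedAddCommGroup V] [InnerProductSpace ℝ V]
    (a : V →ₗ[ℝ] V →ₗ[ℝ] ℝ) (αLB γδ : ℝ) (hαLB : 0 < αLB)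
    (f : V →L[ℝ] ℝ)
    (Vδ Vrb : Submodule ℝ V)
    (hsub : Vrb ≤ Vδ)
    (hcoer : ∀ v ∈ Vδ, αLB * ‖v‖ ^ 2 ≤ a v v)
    (hcont : ∀ w ∈ Vδ, ∀ v ∈ Vδ, a w v ≤ γδ * ‖w‖ * ‖v‖)
    (uδ urb : V) (huδ : uδ ∈ Vδ) (hurb : urb ∈ Vrb)
    (hGδ : ∀ v ∈ Vδ, a uδ v = f v)
    (rhat : V) (hrhat : rhat ∈ Vδ)
    (hriesz : ∀ v ∈ Vδ, (⟪rhat, v⟫ : ℝ) = f v - a urb v)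
    (hne : uδ ≠ urb) (hurb0 : urb ≠ 0)
    (hrel : 2 * ‖rhat‖ / (αLB * ‖urb‖) ≤ 1) :
    (2 * ‖rhat‖ / (αLB * ‖urb‖)) * ‖uδ‖ / ‖uδ - urb‖ ≤ 3 * γδ / αLB := by
  have hurbδ : urb ∈ Vδ := hsub hurb
  have herrδ : uδ - urb ∈ Vδ := Vδ.sub_mem huδ hurbδ
  have herr_eq : ∀ v ∈ Vδ, a (uδ - urb) v = ⟪rhat, v⟫ := fun v hv => by
    rw [map_sub, LinearMap.sub_apply, hGδ v hv, hriesz v hv]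
  have hγ : 0 ≤ γδ := hαLB.le.trans (coercivity_le_continuity hcoer hcont hurbδ hurb0)
  have hlower := mul_norm_le_norm_of_coercive hcoer herrδ herr_eq
  have hupper := norm_le_mul_norm_of_bounded hcont hγ herrδ hrhat herr_eq
  have hurb_pos : 0 < ‖urb‖ := norm_pos_iff.mpr hurb0
  have herr_pos : 0 < ‖uδ - urb‖ := norm_pos_iff.mpr (sub_ne_zero.mpr hne)
  have hrel' : 2 * ‖rhat‖ ≤ αLB * ‖urb‖ := (div_le_one (by positivity)).mp hrel
  have huδ_le : ‖uδ‖ ≤ 3 / 2 * ‖urb‖ := by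
    have := norm_le_norm_add_norm_sub' uδ urb
    nlinarith
  rw [div_mul_eq_mul_div, div_div, div_le_div_iff₀ (by positivity) hαLB]
  calc 2 * ‖rhat‖ * ‖uδ‖ * αLB ≤ 2 * (γδ * ‖uδ - urb‖) * (3 / 2 * ‖urb‖) * αLB := by gcongr
    _ = 3 * γδ * (αLB * ‖urb‖ * ‖uδ - urb‖) := by ring

/-- Relative V-norm effectivity bound: if `η_{V,rel} = 2‖r̂‖/(α_LB‖u_rb‖) ≤ 1`,
then `eff_{V,rel} = η_{V,rel}‖uδ‖/‖uδ - u_rb‖ ≤ 3 γ_δ / α_LB`. -/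
theorem relative_V_norm_effectivity_bound
    {V : Type*} [NormedAddCommGroup V] [InnerProductSpace ℝ V] [CompleteSpace V]
    (a : V →ₗ[ℝ] V →ₗ[ℝ] ℝ) (αLB γδ : ℝ) (hαLB : 0 < αLB)
    (hsymm : ∀ w v : V, a w v = a v w)
    (f : V →L[ℝ] ℝ)
    (Vδ Vrb : Submodule ℝ V) (hVδ : IsClosed (Vδ : Set V))
    (hsub : Vrb ≤ Vδ)
    (hcoer : ∀ v ∈ Vδ, αLB * ‖v‖ ^ 2 ≤ a v v)
    (hcont : ∀ w ∈ Vδ, ∀ v ∈ Vδ, a w v ≤ γδ * ‖w‖ * ‖v‖)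
    (uδ urb : V) (huδ : uδ ∈ Vδ) (hurb : urb ∈ Vrb)
    (hGδ : ∀ v ∈ Vδ, a uδ v = f v)
    (hGrb : ∀ v ∈ Vrb, a urb v = f v)
    (rhat : V) (hrhat : rhat ∈ Vδ)
    (hriesz : ∀ v ∈ Vδ, (⟪rhat, v⟫ : ℝ) = f v - a urb v)
    (hne : uδ ≠ urb) (hurb0 : urb ≠ 0)
    (hrel : 2 * ‖rhat‖ / (αLB * ‖urb‖) ≤ 1) :
    (2 * ‖rhat‖ / (αLB * ‖urb‖)) * ‖uδ‖ / ‖uδ - urb‖ ≤ 3 * γδ / αLB :=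
  relative_V_norm_effectivity_bound_general a αLB γδ hαLB f Vδ Vrb hsub hcoer hcont uδ urb huδ hurb
    hGδ rhat hrhat hriesz hne hurb0 hrel
end

section
/- Relative output error bound (compliant case): if s_δ = f(u_δ) > 0, then (s_δ − s_rb)/s_δ ≤ η_{s,rel} where η_{s,rel} = ‖r̂‖²/(α_LB · s_rb), assuming s_rb > 0, α_LB > 0 a lower bound on the coercivity constant of a on V_δ, and using s_δ − s_rb = ‖u_δ − u_rb‖_a² together with s_rb ≤ s_δ. -/
open RealInnerProductSpace

/-- Relative output error bound (compliant case):
`(s_δ - s_rb)/s_δ ≤ ‖r̂‖²/(α_LB s_rb)` when `s_δ, s_rb > 0`. -/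
theorem relative_output_error_bound
    {V : Type*} [NormedAddCommGroup V] [InnerProductSpace ℝ V] [CompleteSpace V]
    (a : V →ₗ[ℝ] V →ₗ[ℝ] ℝ) (αLB γδ : ℝ) (hαLB : 0 < αLB)
    (hsymm : ∀ w v : V, a w v = a v w)
    (hcont : ∀ w v : V, |a w v| ≤ γδ * ‖w‖ * ‖v‖)
    (f : V →L[ℝ] ℝ)
    (Vδ Vrb : Submodule ℝ V) (hVδ : IsClosed (Vδ : Set V))
    (hsub : Vrb ≤ Vδ)
    (hcoer : ∀ v ∈ Vδ, αLB * ‖v‖ ^ 2 ≤ a v v)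
    (uδ urb : V) (huδ : uδ ∈ Vδ) (hurb : urb ∈ Vrb)
    (hGδ : ∀ v ∈ Vδ, a uδ v = f v)
    (hGrb : ∀ v ∈ Vrb, a urb v = f v)
    (rhat : V) (hrhat : rhat ∈ Vδ)
    (hriesz : ∀ v ∈ Vδ, (⟪rhat, v⟫ : ℝ) = f v - a urb v)
    (hsδ : 0 < f uδ) (hsrb : 0 < f urb) :
    (f uδ - f urb) / f uδ ≤ ‖rhat‖ ^ 2 / (αLB * f urb) := by
  set e := uδ - urb with he
  have heδ : e ∈ Vδ := Vδ.sub_mem huδ (hsub hurb)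
  -- a e e = f uδ - f urb
  have hae : a e e = f uδ - f urb := by
    have h1 : a uδ uδ = f uδ := hGδ uδ huδ
    have h2 : a urb urb = f urb := hGrb urb hurb
    have h3 : a uδ urb = f urb := hGδ urb (hsub hurb)
    have h4 : a urb uδ = f urb := by rw [hsymm, h3]
    simp [he, map_sub, LinearMap.sub_apply, h1, h2, h3, h4]
  -- a e e = ⟪rhat, e⟫
  have hinner : a e e = ⟪rhat, e⟫ := by
    have h1 : (⟪rhat, e⟫ : ℝ) = f e - a urb e := hriesz e heδ
    have h2 : a uδ e = f e := hGδ e heδ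
    have h3 : a e e = a uδ e - a urb e := by
      simp only [he, map_sub, LinearMap.sub_apply]
      ring
    rw [h3, h2, h1]
  have hcs : (⟪rhat, e⟫ : ℝ) ≤ ‖rhat‖ * ‖e‖ := real_inner_le_norm rhat e
  have hco : αLB * ‖e‖ ^ 2 ≤ a e e := hcoer e heδ
  have hnn : (0:ℝ) ≤ ‖e‖ := norm_nonneg e
  have hrn : (0:ℝ) ≤ ‖rhat‖ := norm_nonneg rhat
  -- αLB * (a e e) ≤ ‖rhat‖²
  have hkey : αLB * a e e ≤ ‖rhat‖ ^ 2 := by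
    nlinarith [sq_nonneg (‖rhat‖ - αLB * ‖e‖), mul_le_mul_of_nonneg_left hcs hαLB.le]
  have hDnn : 0 ≤ f uδ - f urb := by nlinarith [hcoer e heδ, sq_nonneg ‖e‖]
  have hkey' : αLB * (f uδ - f urb) ≤ ‖rhat‖ ^ 2 := by rw [← hae]; exact hkey
  rw [div_le_div_iff₀ hsδ (by positivity)]
  nlinarith [hkey', hDnn, hsrb, hsδ, sq_nonneg ‖rhat‖,
    mul_le_mul_of_nonneg_left hkey' hsrb.le]
end
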